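/- At every intermediate stage of the inductive construction of T(∞) (after each placement of an entry), no column of the partially constructed tableau contains a gap, that is, an empty box having a filled box above it and a filled box below it in the same column. -/

import Mathlib

open scoped Classical

/-- height of column `j` of the diagram (columns numbered from 1). -/
def hgt (c : List ℕ) (j : ℕ) : ℕ := c.getD (j - 1) 0

/-- number of boxes in the columns strictly to the left of column `j`. -/
def off (c : List ℕ) (j : ℕ) : ℕ := (c.take (j - 1)).sum

/-- `(i, j)` (row `i`, column `j`) is a box of the diagram `D`. -/
def IsBox (c : List ℕ) (i j : ℕ) : Prop :=
  1 ≤ j ∧ j ≤ c.length ∧ 1 ≤ i ∧ i ≤ hgt c j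

/-- the entry of the box `(i, j)` in the tableau `T`. -/
def Tentry (c : List ℕ) (i j : ℕ) : ℕ := off c j + i

/-- the column of the box of `D` carrying entry `m` in `T`. -/
noncomputable def colOf (c : List ℕ) (m : ℕ) : ℕ := sInf {j | m ≤ (c.take j).sum}

/-- the row of the box of `D` carrying entry `m` in `T`. -/
noncomputable def rowOf (c : List ℕ) (m : ℕ) : ℕ := m - off c (colOf c m)

/-- the total order `≼` on entries: increasing down columns, then from right to left. -/
def ple (c : List ℕ) (a b : ℕ) : Prop :=
  colOf c b < colOf c a ∨ (colOf c a = colOf c b ∧ a ≤ b)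

/-- the strict version of `≼`. -/
def plt (c : List ℕ) (a b : ℕ) : Prop :=
  colOf c b < colOf c a ∨ (colOf c a = colOf c b ∧ a < b)

/-- column `j` has a left neighbour in `D`. -/
def HasLeftNb (c : List ℕ) (j : ℕ) : Prop :=
  ∃ i, 1 ≤ i ∧ i < j ∧ hgt c i = hgt c j ∧
    ∀ i', i < i' → i' < j → hgt c i' ≠ hgt c j

/-- the `j`-th column of the tableau `T`, rows to optional entries. -/
def Tcol (c : List ℕ) (j : ℕ) : ℕ → Option ℕ := fun i =>
  if 1 ≤ i ∧ i ≤ hgt c j then some (Tentry c i j) else none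

/-- one step of the propagation rule building `T(∞)`: the entry (if any) in row `t`
of column `j - 1` of `T(∞)` (given by `prev`) is propagated into the partially
built column `j` (given by `cur`). -/
noncomputable def propStep (c : List ℕ) (j : ℕ) (prev : ℕ → Option ℕ)
    (cur : ℕ → Option ℕ) (t : ℕ) : ℕ → Option ℕ :=
  match prev t with
  | none => cur
  | some l =>
    if hgt c j = t then
      if HasLeftNb c j ∧ cur (t + 1) = none then
        Function.update cur (t + 1) (some l)
      else cur
    else
      if cur t = none then Function.update cur t (some l) else cur

/-- the `j`-th column of the composition tableau `T(∞)`. -/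
noncomputable def TinfCol (c : List ℕ) : ℕ → ℕ → Option ℕ
  | 0 => fun _ => none
  | 1 => Tcol c 1
  | j + 2 =>
      (List.range (c.sum + 2)).foldl
        (propStep c (j + 2) (TinfCol c (j + 1))) (Tcol c (j + 2))

/-- labels of lines: `1` or `∗`. -/
inductive Lab : Type
  | one : Lab
  | star : Lab
deriving DecidableEq

/-- maximal height among the columns `1, …, j - 1`. -/
def maxHgt (c : List ℕ) (j : ℕ) : ℕ := (c.take (j - 1)).foldr max 0

/-- the maximal column height of the diagram `D`. -/
def maxH (c : List ℕ) : ℕ := c.foldr max 0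

/-- `LineB c a i j lab` : the line family `ℓ(D)` contains a line labelled `lab`
whose left end-point is the box of `D` carrying entry `a` in `T` and whose right
end-point is the box `(i, j)` (row `i` of column `C_j`). -/
def LineB (c : List ℕ) (a i j : ℕ) (lab : Lab) : Prop :=
  2 ≤ j ∧ j ≤ c.length ∧ 1 ≤ i ∧
    (match lab with
     | Lab.one =>
         (maxHgt c j < hgt c j ∧ i ≤ maxHgt c j + 1 ∧ TinfCol c (j - 1) i = some a)
       ∨ (hgt c j ≤ maxHgt c j ∧ i + 1 ≤ hgt c j ∧ TinfCol c (j - 1) i = some a)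
       ∨ (hgt c j ≤ maxHgt c j ∧ i = hgt c j ∧
           ¬(∃ j', 1 ≤ j' ∧ j' < j ∧ hgt c j' = hgt c j) ∧
           TinfCol c (j - 1) i = some a)
       ∨ (hgt c j ≤ maxHgt c j ∧ i = hgt c j ∧
           (∃ j', 1 ≤ j' ∧ j' < j ∧ hgt c j' = hgt c j) ∧
           TinfCol c (j - 1) (i + 1) = some a)
     | Lab.star =>
         hgt c j ≤ maxHgt c j ∧ i = hgt c j ∧
           (∃ j', 1 ≤ j' ∧ j' < j ∧ hgt c j' = hgt c j) ∧
           TinfCol c (j - 1) i = some a)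

/-- `LineE c a b lab` : `ℓ(D)` contains a line labelled `lab` joining the box of `D`
carrying entry `a` in `T` (on the left) to the box carrying entry `b` (on the right). -/
def LineE (c : List ℕ) (a b : ℕ) (lab : Lab) : Prop :=
  ∃ i j, LineB c a i j lab ∧ b = Tentry c i j

/-- the box `(i, j)` of `D` is right extremal relative to `ℓ(D)`. -/
def RExt (c : List ℕ) (i j : ℕ) : Prop :=
  IsBox c i j ∧ ∀ i' j', ¬ LineB c (Tentry c i j) i' j' Lab.one

/-- `c` is a composition of `n`. -/
def IsComposition (c : List ℕ) (n : ℕ) : Prop :=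
  c.sum = n ∧ ∀ x ∈ c, 0 < x

/-! Call a column gap-free when its filled rows are an initial segment of `1, 2, …`. Boxes are
never emptied, and an entry is only ever placed directly below a filled box: in row `t + 1` of a
column of height `t`, whose row `t` carries a `T`-entry, or in row `t` of `C_j` because row `t` of
`C_{j-1}` is filled. In the latter case row `t - 1` of `C_{j-1}` is filled too, as `C_{j-1}` is
gap-free by induction on `j`, so the previous step already filled row `t - 1` of `C_j`. -/

def IsGapFree {α : Type*} (f : ℕ → Option α) : Prop :=
  ∀ i, 1 ≤ i → f i = none → f (i + 1) = none

theorem IsGapFree.update {α : Type*} {f : ℕ → Option α} (hf : IsGapFree f) {p : ℕ} (a : α)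
    (hp : 1 < p → f (p - 1) ≠ none) : IsGapFree (Function.update f p (some a)) := by
  intro i hi hnone
  have hip : i ≠ p := by
    rintro rfl
    simp at hnone
  rw [Function.update_of_ne hip] at hnone
  have hip' : i + 1 ≠ p := by
    rintro rfl
    exact hp (by omega) (by simpa using hnone)
  rw [Function.update_of_ne hip']
  exact hf i hi hnone

theorem update_some_ne_none {β α : Type*} [DecidableEq β] {f : β → Option α} {i : β}
    (h : f i ≠ none) (p : β) (a : α) : Function.update f p (some a) i ≠ none := by
  rcases eq_or_ne i p with rfl | hne
  · simp
  · rwa [Function.update_of_ne hne]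

theorem isGapFree_Tcol (c : List ℕ) (j : ℕ) : IsGapFree (Tcol c j) := by
  intro i hi hnone
  simp only [Tcol, ite_eq_right_iff, reduceCtorEq, imp_false, not_and, not_le] at hnone ⊢
  omega

section propStep

variable (c : List ℕ) (j : ℕ) (prev : ℕ → Option ℕ)

theorem propStep_ne_none {f : ℕ → Option ℕ} {i : ℕ} (t : ℕ) (h : f i ≠ none) :
    propStep c j prev f t i ≠ none := by
  unfold propStep
  rcases prev t with _ | l
  · exact h
  · dsimp only
    split_ifs <;> first | exact h | exact update_some_ne_none h _ _

theorem foldl_propStep_ne_none (l : List ℕ) {f : ℕ → Option ℕ} {i : ℕ} (h : f i ≠ none) :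
    l.foldl (propStep c j prev) f i ≠ none := by
  induction l generalizing f with
  | nil => exact h
  | cons t l ih => exact ih (propStep_ne_none c j prev t h)

theorem propStep_self_ne_none {f : ℕ → Option ℕ} {t : ℕ} (hprev : prev t ≠ none)
    (htop : hgt c j = t → f t ≠ none) : propStep c j prev f t t ≠ none := by
  obtain ⟨l, hl⟩ := Option.ne_none_iff_exists'.mp hprev
  unfold propStep
  rw [hl]
  dsimp only
  split_ifs with hh _ hft
  · rw [Function.update_of_ne (by omega)]
    exact htop hh
  · exact htop hh
  · simp
  · exact hft

theorem propStep_isGapFree {f : ℕ → Option ℕ} {t : ℕ} (hprev : IsGapFree prev)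
    (hf : IsGapFree f) (hT : ∀ i, 1 ≤ i → i ≤ hgt c j → f i ≠ none)
    (hrows : ∀ s, 1 ≤ s → s < t → prev s ≠ none → f s ≠ none) :
    IsGapFree (propStep c j prev f t) := by
  unfold propStep
  rcases hpt : prev t with _ | l
  · exact hf
  · dsimp only
    split_ifs with hh
    · exact hf.update l fun _ => hT t (by omega) hh.ge
    · exact hf
    · refine hf.update l fun ht => hrows (t - 1) (by omega) (by omega) fun hnone => ?_
      have := hprev (t - 1) (by omega) hnone
      rw [Nat.sub_add_cancel (by omega), hpt] at this
      cases this
    · exact hf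

theorem foldl_range_propStep_isGapFree (hprev : IsGapFree prev) (m : ℕ) :
    IsGapFree ((List.range m).foldl (propStep c j prev) (Tcol c j)) ∧
      ∀ s, 1 ≤ s → s < m → prev s ≠ none →
        (List.range m).foldl (propStep c j prev) (Tcol c j) s ≠ none := by
  induction m with
  | zero => exact ⟨isGapFree_Tcol c j, fun s _ hs => absurd hs (Nat.not_lt_zero s)⟩
  | succ m ih =>
    obtain ⟨hgap, hrows⟩ := ih
    set f := (List.range m).foldl (propStep c j prev) (Tcol c j)
    have hT : ∀ i, 1 ≤ i → i ≤ hgt c j → f i ≠ none := fun i hi hij =>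
      foldl_propStep_ne_none c j prev _ (by simp [Tcol, hi, hij])
    rw [List.range_succ, List.foldl_append, List.foldl_cons, List.foldl_nil]
    refine ⟨propStep_isGapFree c j prev hprev hgap hT hrows, fun s hs hsm hps => ?_⟩
    rcases Nat.lt_succ_iff_lt_or_eq.mp hsm with hsm | rfl
    · exact propStep_ne_none c j prev m (hrows s hs hsm hps)
    · exact propStep_self_ne_none c j prev hps fun hh => hT s hs hh.ge

end propStep

theorem isGapFree_TinfCol (c : List ℕ) : ∀ j, IsGapFree (TinfCol c j)
  | 0 => fun _ _ _ => rfl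
  | 1 => isGapFree_Tcol c 1
  | j + 2 =>
    (foldl_range_propStep_isGapFree c (j + 2) _ (isGapFree_TinfCol c (j + 1)) _).1

theorem statement1_general (c : List ℕ) :
    ∀ j m i, 2 ≤ j → j ≤ c.length → 1 ≤ i →
      ((List.range m).foldl (propStep c j (TinfCol c (j - 1))) (Tcol c j)) i = none →
      ((List.range m).foldl (propStep c j (TinfCol c (j - 1))) (Tcol c j)) (i + 1) = none :=
  fun j m i _ _ => (foldl_range_propStep_isGapFree c j _ (isGapFree_TinfCol c (j - 1)) m).1 i

/-- at every intermediate stage of the inductive construction of `T(∞)`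
(i.e. after any number `m` of steps of the propagation filling in a column `j`),
no column of the partially constructed tableau contains a gap: an empty box with a
filled box above it and a filled box below it in the same column. -/
theorem statement1 (n : ℕ) (hn : 0 < n) (c : List ℕ) (hc : IsComposition c n) :
    ∀ j m i, 2 ≤ j → j ≤ c.length → 1 ≤ i →
      ((List.range m).foldl (propStep c j (TinfCol c (j - 1))) (Tcol c j)) i = none →
      ((List.range m).foldl (propStep c j (TinfCol c (j - 1))) (Tcol c j)) (i + 1) = none :=
  statement1_general c
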